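/- Let Y ∈ ℝ^{M×R} with orthonormal columns, Y_n ∈ ℝ^{R×n} with orthonormal columns, P ∈ ℝ^{M×R} a selection matrix such that PᵀY is invertible. Set Y_α = Y Y_n. Then ‖Y_n (PᵀY_α)†‖ ≤ ‖(PᵀY)^{-1}‖, where (PᵀY_α)† is the Moore–Penrose pseudo-inverse of PᵀY Y_n ∈ ℝ^{R×n}. -/

import Mathlib

/-!
Write `B = PᵀY` and `A = B Yₙ`. Since `B` is invertible, `Yₙ A† = B⁻¹ (A A†)`, and
`A A† = A (AᵀA)⁻¹ Aᵀ` is an orthogonal projection, so its spectral norm is at most `1`.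
This holds even when `AᵀA` is singular: the junk inverse `0` makes the projection `0`.
-/

open Matrix

noncomputable def specNorm {m n : ℕ} (A : Matrix (Fin m) (Fin n) ℝ) : ℝ :=
  ‖LinearMap.toContinuousLinearMap (Matrix.toEuclideanLin A)‖

/-- Moore–Penrose pseudo-inverse of a full-column-rank matrix: `A† = (AᵀA)⁻¹Aᵀ`. -/
noncomputable def leftPinv {R n : ℕ} (A : Matrix (Fin R) (Fin n) ℝ) :
    Matrix (Fin n) (Fin R) ℝ :=
  (Aᵀ * A)⁻¹ * Aᵀ

open scoped Matrix.Norms.L2Operator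

lemma specNorm_eq_l2_opNorm {m n : ℕ} (A : Matrix (Fin m) (Fin n) ℝ) :
    specNorm A = ‖A‖ :=
  rfl

lemma specNorm_mul_le {m k n : ℕ} (A : Matrix (Fin m) (Fin k) ℝ)
    (B : Matrix (Fin k) (Fin n) ℝ) : specNorm (A * B) ≤ specNorm A * specNorm B :=
  l2_opNorm_mul A B

lemma Matrix.nonsing_inv_mul_mul_nonsing_inv {n α : Type*} [Fintype n] [DecidableEq n]
    [CommRing α] (A : Matrix n n α) : A⁻¹ * A * A⁻¹ = A⁻¹ := by
  by_cases h : IsUnit A.det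
  · rw [nonsing_inv_mul A h, Matrix.one_mul]
  · rw [nonsing_inv_apply_not_isUnit A h, Matrix.mul_zero]

lemma isStarProjection_mul_nonsing_inv_mul_conjTranspose {m n α : Type*} [Fintype m]
    [Fintype n] [DecidableEq n] [CommRing α] [StarRing α] (A : Matrix m n α) :
    IsStarProjection (A * (Aᴴ * A)⁻¹ * Aᴴ) where
  isIdempotentElem := by
    calc A * (Aᴴ * A)⁻¹ * Aᴴ * (A * (Aᴴ * A)⁻¹ * Aᴴ)
        = A * ((Aᴴ * A)⁻¹ * (Aᴴ * A) * (Aᴴ * A)⁻¹) * Aᴴ := by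
          simp only [Matrix.mul_assoc]
      _ = A * (Aᴴ * A)⁻¹ * Aᴴ := by rw [nonsing_inv_mul_mul_nonsing_inv]
  isSelfAdjoint := by
    rw [IsSelfAdjoint, star_eq_conjTranspose]
    simp only [conjTranspose_mul, conjTranspose_nonsing_inv, conjTranspose_conjTranspose,
      Matrix.mul_assoc]

lemma specNorm_mul_leftPinv_le_one {m n : ℕ} (A : Matrix (Fin m) (Fin n) ℝ) :
    specNorm (A * leftPinv A) ≤ 1 := by
  have hproj := isStarProjection_mul_nonsing_inv_mul_conjTranspose A
  rw [conjTranspose_eq_transpose_of_trivial] at hproj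
  rw [specNorm_eq_l2_opNorm, leftPinv, ← Matrix.mul_assoc]
  exact hproj.norm_le

lemma mul_leftPinv_mul_eq_nonsing_inv_mul {R n : ℕ} (B : Matrix (Fin R) (Fin R) ℝ)
    (hB : IsUnit B) (C : Matrix (Fin R) (Fin n) ℝ) :
    C * leftPinv (B * C) = B⁻¹ * (B * C * leftPinv (B * C)) := by
  rw [← Matrix.mul_assoc, nonsing_inv_mul_cancel_left (A := B) C (B.isUnit_iff_isUnit_det.mp hB)]

theorem local_pinv_spec_bound_general {M R n : ℕ}
    (Y : Matrix (Fin M) (Fin R) ℝ)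
    (Yn : Matrix (Fin R) (Fin n) ℝ)
    (P : Matrix (Fin M) (Fin R) ℝ)
    (hinv : IsUnit (Pᵀ * Y)) :
    specNorm (Yn * leftPinv (Pᵀ * Y * Yn)) ≤ specNorm ((Pᵀ * Y)⁻¹) := by
  set B := Pᵀ * Y
  calc specNorm (Yn * leftPinv (B * Yn))
      = specNorm (B⁻¹ * (B * Yn * leftPinv (B * Yn))) := by
        rw [← mul_leftPinv_mul_eq_nonsing_inv_mul B hinv]
    _ ≤ specNorm B⁻¹ * specNorm (B * Yn * leftPinv (B * Yn)) := specNorm_mul_le _ _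
    _ ≤ specNorm B⁻¹ := mul_le_of_le_one_right (norm_nonneg _) (specNorm_mul_leftPinv_le_one _)

/-- `‖Yₙ (PᵀY_α)†‖ ≤ ‖(PᵀY)⁻¹‖` where `Y_α = Y Yₙ`, `Y` and `Yₙ` have orthonormal
columns and `P` is a selection matrix with `PᵀY` invertible. -/
theorem local_pinv_spec_bound {M R n : ℕ} (hMR : R ≤ M) (hRn : n ≤ R)
    (Y : Matrix (Fin M) (Fin R) ℝ) (hY : Yᵀ * Y = 1)
    (Yn : Matrix (Fin R) (Fin n) ℝ) (hYn : Ynᵀ * Yn = 1)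
    (η : Fin R → Fin M) (hη : Function.Injective η)
    (P : Matrix (Fin M) (Fin R) ℝ)
    (hP : ∀ i j, P i j = if i = η j then 1 else 0)
    (hinv : IsUnit (Pᵀ * Y)) :
    specNorm (Yn * leftPinv (Pᵀ * Y * Yn)) ≤ specNorm ((Pᵀ * Y)⁻¹) :=
  local_pinv_spec_bound_general Y Yn P hinv
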